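/- There exist binary words x such that J(x) > J(1x1), where J is the maximum fold score in the 2D rectangular lattice. In particular, the word x = (011)³ 1^{10} 0110 110 satisfies J(x) = Z(x)+1 = 9 while J(1x1) ≤ Z(x) = 8. -/

import Mathlib

/-- L¹ distance on ℤ². -/
def d2 (p q : ℤ × ℤ) : ℕ := (p.1 - q.1).natAbs + (p.2 - q.2).natAbs

/-- Adjacency in the 2D rectangular lattice. -/
def adj2 (p q : ℤ × ℤ) : Prop := d2 p q = 1

/-- Adjacency in the hexagonal (3-regular, brick-wall) lattice. -/
def hexAdj (p q : ℤ × ℤ) : Prop :=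
  (p.2 = q.2 ∧ (p.1 - q.1).natAbs = 1) ∨
  (p.1 = q.1 ∧ ((q.2 = p.2 + 1 ∧ (p.1 + p.2) % 2 = 0) ∨ (p.2 = q.2 + 1 ∧ (q.1 + q.2) % 2 = 0)))

/-- A fold (self-avoiding walk) of a binary word `w` on a lattice with adjacency `A`:
letters `false` = hydrophobic (0), `true` = polar (1). -/
def IsFold (A : ℤ × ℤ → ℤ × ℤ → Prop) (w : List Bool) (F : Fin w.length → ℤ × ℤ) : Prop :=
  Function.Injective F ∧
    ∀ (i : ℕ) (h : i + 1 < w.length), A (F ⟨i, by omega⟩) (F ⟨i + 1, h⟩)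

/-- The score of a fold: the number of (unordered) pairs of non-consecutive positions,
both labeled 0, whose images are adjacent. -/
noncomputable def score (A : ℤ × ℤ → ℤ × ℤ → Prop) (w : List Bool) (F : Fin w.length → ℤ × ℤ) : ℕ :=
  Set.ncard {p : Fin w.length × Fin w.length |
    p.1.1 + 2 ≤ p.2.1 ∧ w.get p.1 = false ∧ w.get p.2 = false ∧ A (F p.1) (F p.2)}

/-- The optimal score over all folds of `w`. -/
noncomputable def J (A : ℤ × ℤ → ℤ × ℤ → Prop) (w : List Bool) : ℕ :=
  sSup {s | ∃ F, IsFold A w F ∧ score A w F = s}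

/-!
Every point of the square lattice has four neighbours. For a zero at an internal position of the
word two of them are taken by its neighbours along the chain, so it lies in at most two contacts;
a zero at an end of the word lies in at most three. Every contact joins two zeros, so twice the
score is at most `2 Z(w)` plus the number of zeros at the ends of `w`. Hence `J(w) ≤ Z(w) + 1`
for every word, and `J(1w1) ≤ Z(w)` since `1w1` has no zero at its ends. The word `x` reaches
`Z(x) + 1 = 7` with an explicit fold.
-/

open Finset

instance : DecidableRel adj2 := fun p q => inferInstanceAs (Decidable (d2 p q = 1))

theorem adj2_comm {p q : ℤ × ℤ} : adj2 p q ↔ adj2 q p := by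
  unfold adj2 d2; omega

def latticeNbrs (q : ℤ × ℤ) : Finset (ℤ × ℤ) :=
  {(q.1 + 1, q.2), (q.1 - 1, q.2), (q.1, q.2 + 1), (q.1, q.2 - 1)}

theorem mem_latticeNbrs_of_adj2 {p q : ℤ × ℤ} (h : adj2 p q) : q ∈ latticeNbrs p := by
  obtain ⟨a, b⟩ := p
  obtain ⟨c, d⟩ := q
  unfold adj2 d2 at h
  simp only [latticeNbrs, mem_insert, mem_singleton, Prod.mk.injEq]
  omega

theorem IsFold.adj2_of_succ_eq {w : List Bool} {F : Fin w.length → ℤ × ℤ}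
    (hF : IsFold adj2 w F) {i j : Fin w.length} (h : i.1 + 1 = j.1) : adj2 (F i) (F j) := by
  obtain ⟨j, hj⟩ := j
  subst h
  exact hF.2 i.1 hj

section Contacts

variable {w : List Bool} {F : Fin w.length → ℤ × ℤ}

def contactGraph (w : List Bool) (F : Fin w.length → ℤ × ℤ) : SimpleGraph (Fin w.length) where
  Adj i j := (i.1 + 2 ≤ j.1 ∨ j.1 + 2 ≤ i.1) ∧ w.get i = false ∧ w.get j = false ∧
    adj2 (F i) (F j)
  symm := ⟨fun _ _ ⟨hij, hi, hj, h⟩ => ⟨hij.symm, hj, hi, adj2_comm.1 h⟩⟩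
  loopless := ⟨fun i ⟨hij, _⟩ => by omega⟩

instance : DecidableRel (contactGraph w F).Adj :=
  fun _ _ => inferInstanceAs (Decidable (_ ∧ _))

theorem score_eq_card_filter :
    score adj2 w F = #{p : Fin w.length × Fin w.length |
      p.1.1 + 2 ≤ p.2.1 ∧ w.get p.1 = false ∧ w.get p.2 = false ∧ adj2 (F p.1) (F p.2)} := by
  rw [score, ← Set.ncard_coe_finset, coe_filter]
  simp only [mem_univ, true_and]

theorem score_eq_card_edgeFinset : score adj2 w F = #(contactGraph w F).edgeFinset := by
  rw [score_eq_card_filter]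
  refine card_bij (fun p _ => s(p.1, p.2)) ?_ ?_ ?_
  · intro p hp
    simp only [mem_filter, mem_univ, true_and] at hp
    simp only [SimpleGraph.mem_edgeFinset, SimpleGraph.mem_edgeSet]
    exact ⟨Or.inl hp.1, hp.2⟩
  · intro p hp q hq hpq
    simp only [mem_filter, mem_univ, true_and] at hp hq
    rcases Sym2.eq_iff.1 hpq with ⟨h1, h2⟩ | ⟨h1, h2⟩
    · exact Prod.ext h1 h2
    · have := congrArg Fin.val h1
      have := congrArg Fin.val h2
      omega
  · intro e he
    induction e using Sym2.ind with
    | h i j =>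
      simp only [SimpleGraph.mem_edgeFinset, SimpleGraph.mem_edgeSet] at he
      obtain ⟨hij | hji, hi, hj, h⟩ := he
      · exact ⟨(i, j), mem_filter.2 ⟨mem_univ _, hij, hi, hj, h⟩, rfl⟩
      · exact ⟨(j, i), mem_filter.2 ⟨mem_univ _, hji, hj, hi, adj2_comm.1 h⟩, Sym2.eq_swap⟩

theorem degree_add_card_le_four (hF : IsFold adj2 w F) (i : Fin w.length)
    (s : Finset (Fin w.length)) (hs : ∀ j ∈ s, j.1 + 1 = i.1 ∨ i.1 + 1 = j.1) :
    (contactGraph w F).degree i + #s ≤ 4 := by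
  have hdisj : Disjoint ((contactGraph w F).neighborFinset i) s := by
    refine disjoint_left.2 fun j hj hjs => ?_
    obtain ⟨hij, -⟩ := (SimpleGraph.mem_neighborFinset _ _ _).1 hj
    have := hs j hjs
    omega
  rw [← SimpleGraph.card_neighborFinset_eq_degree, ← card_union_of_disjoint hdisj]
  calc #((contactGraph w F).neighborFinset i ∪ s) ≤ #(latticeNbrs (F i)) := by
        refine card_le_card_of_injOn F (fun j hj => mem_latticeNbrs_of_adj2 ?_) hF.1.injOn
        rcases mem_union.1 hj with hj | hj
        · exact ((SimpleGraph.mem_neighborFinset _ _ _).1 hj).2.2.2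
        · rcases hs j hj with h | h
          · exact adj2_comm.1 (hF.adj2_of_succ_eq h)
          · exact hF.adj2_of_succ_eq h
    _ ≤ 4 := card_le_four

theorem degree_le (hF : IsFold adj2 w F) (i : Fin w.length) :
    (contactGraph w F).degree i ≤ 2 + if i.1 = 0 ∨ i.1 + 1 = w.length then 1 else 0 := by
  split_ifs with hi
  · by_cases hlen : 2 ≤ w.length
    · obtain ⟨j, hj⟩ : ∃ j : Fin w.length, j.1 + 1 = i.1 ∨ i.1 + 1 = j.1 := by
        by_cases h : i.1 + 1 < w.length
        · exact ⟨⟨i.1 + 1, h⟩, Or.inr rfl⟩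
        · exact ⟨⟨i.1 - 1, by omega⟩, Or.inl (by simp; omega)⟩
      have h := degree_add_card_le_four hF i {j} (by simpa using hj)
      rw [card_singleton] at h
      omega
    · have : (contactGraph w F).neighborFinset i = ∅ := by
        refine eq_empty_of_forall_notMem fun j hj => ?_
        obtain ⟨hij, -⟩ := (SimpleGraph.mem_neighborFinset _ _ _).1 hj
        have := j.2
        have := i.2
        omega
      rw [← SimpleGraph.card_neighborFinset_eq_degree, this, card_empty]
      omega
  · have hlt : i.1 + 1 < w.length := by have := i.2; omega
    have h := degree_add_card_le_four hF i {⟨i.1 - 1, by omega⟩, ⟨i.1 + 1, hlt⟩}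
      (by simp only [mem_insert, mem_singleton]; rintro j (rfl | rfl) <;> simp; omega)
    rw [card_pair (Fin.ne_of_val_ne (by simp only; omega))] at h
    omega

theorem card_filter_get_eq_false (w : List Bool) :
    #{i : Fin w.length | w.get i = false} = w.count false :=
  Fin.card_filter_univ_eq_vector_get_eq_count false (⟨w, rfl⟩ : List.Vector Bool w.length)

theorem two_mul_score_le (hF : IsFold adj2 w F) :
    2 * score adj2 w F ≤ 2 * w.count false +
      #{i : Fin w.length | w.get i = false ∧ (i.1 = 0 ∨ i.1 + 1 = w.length)} := by
  have hzero : ∀ i ∈ univ, (contactGraph w F).degree i ≠ 0 → w.get i = false := by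
    intro i _ hi
    obtain ⟨j, hij⟩ := (contactGraph w F).degree_pos_iff_exists_adj i |>.1 (Nat.pos_of_ne_zero hi)
    exact hij.2.1
  rw [score_eq_card_edgeFinset, ← SimpleGraph.sum_degrees_eq_twice_card_edges,
    ← sum_filter_of_ne hzero, ← card_filter_get_eq_false, ← filter_filter]
  calc ∑ i with w.get i = false, (contactGraph w F).degree i
      ≤ ∑ i with w.get i = false, (2 + if i.1 = 0 ∨ i.1 + 1 = w.length then 1 else 0) :=
        sum_le_sum fun i _ => degree_le hF i
    _ = _ := by rw [sum_add_distrib, sum_const, smul_eq_mul, sum_boole, mul_comm]; rfl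

theorem score_le_count_false_add_one (hF : IsFold adj2 w F) :
    score adj2 w F ≤ w.count false + 1 := by
  have hends : #{i : Fin w.length | w.get i = false ∧ (i.1 = 0 ∨ i.1 + 1 = w.length)} ≤ 2 :=
    calc _ ≤ #{i : Fin w.length | i.1 = 0} + #{i : Fin w.length | i.1 + 1 = w.length} := by
          refine (card_le_card fun i hi => ?_).trans (card_union_le _ _)
          simp only [mem_filter, mem_univ, true_and, mem_union] at hi ⊢
          exact hi.2
      _ ≤ 1 + 1 := by
          gcongr <;> exact card_le_one.2 fun a ha b hb => by
            simp only [mem_filter, mem_univ, true_and] at ha hb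
            exact Fin.ext (by omega)
  have := two_mul_score_le hF
  omega

end Contacts

theorem score_le_count_false_of_one_append_append_one (w : List Bool)
    {F : Fin ([true] ++ w ++ [true]).length → ℤ × ℤ} (hF : IsFold adj2 ([true] ++ w ++ [true]) F) :
    score adj2 ([true] ++ w ++ [true]) F ≤ w.count false := by
  have hends : #{i : Fin ([true] ++ w ++ [true]).length | ([true] ++ w ++ [true]).get i = false ∧
      (i.1 = 0 ∨ i.1 + 1 = ([true] ++ w ++ [true]).length)} = 0 := by
    refine card_eq_zero.2 (filter_eq_empty_iff.2 fun i _ ⟨hi, hend⟩ => ?_)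
    obtain ⟨i, hi'⟩ := i
    simp only [List.length_append, List.length_singleton] at hi' hend
    obtain rfl | rfl : i = 0 ∨ i = w.length + 1 := by omega
    · simp at hi
    · simp [List.getElem_append_right] at hi
  have := two_mul_score_le hF
  have hcount : ([true] ++ w ++ [true]).count false = w.count false := by simp
  rw [hcount, hends] at this
  omega

theorem J_le_of_forall_score_le {w : List Bool} {B : ℕ}
    (h : ∀ F, IsFold adj2 w F → score adj2 w F ≤ B) : J adj2 w ≤ B :=
  csSup_le' (by rintro _ ⟨F, hF, rfl⟩; exact h F hF)

theorem score_le_J {w : List Bool} {F : Fin w.length → ℤ × ℤ} (hF : IsFold adj2 w F) :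
    score adj2 w F ≤ J adj2 w :=
  le_csSup ⟨w.count false + 1, by rintro _ ⟨G, hG, rfl⟩; exact score_le_count_false_add_one hG⟩
    ⟨F, hF, rfl⟩

theorem J_le_count_false_add_one (w : List Bool) : J adj2 w ≤ w.count false + 1 :=
  J_le_of_forall_score_le fun _ => score_le_count_false_add_one

theorem J_one_append_append_one_le_count_false (w : List Bool) :
    J adj2 ([true] ++ w ++ [true]) ≤ w.count false :=
  J_le_of_forall_score_le fun _ => score_le_count_false_of_one_append_append_one w

theorem seven_le_J :
    7 ≤ J adj2 ([false, true, true, false, true, true, false, true, true] ++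
      List.replicate 10 true ++ [false, true, true, false] ++ [true, true, false]) := by
  let F : Fin 26 → ℤ × ℤ :=
    ![(0, 1), (0, 2), (1, 2), (1, 1), (2, 1), (2, 0), (1, 0), (1, -1), (2, -1), (3, -1), (3, 0),
      (3, 1), (3, 2), (2, 2), (2, 3), (1, 3), (0, 3), (-1, 3), (-1, 2), (-1, 1), (-2, 1), (-2, 0),
      (-1, 0), (-1, -1), (0, -1), (0, 0)]
  refine (Eq.le ?_).trans (score_le_J (F := F) ⟨by decide, fun i h => ?_⟩)
  · rw [score_eq_card_filter]
    decide
  · have hsteps : ∀ j : Fin 25, adj2 (F j.castSucc) (F j.succ) := by decide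
    exact hsteps ⟨i, Nat.lt_of_succ_lt_succ h⟩

/-- Nonmonotonicity of optimal folding in the 2D rectangular lattice: there are words `x`
with `J(x) > J(1x1)`; in particular `x = (011)^3 1^10 0110 110` satisfies
`J(x) = Z(x) + 1` while `J(1x1) ≤ Z(x)`. -/
theorem stmt10 :
    let x : List Bool :=
      [false, true, true, false, true, true, false, true, true] ++
        List.replicate 10 true ++ [false, true, true, false] ++ [true, true, false]
    (∃ y : List Bool, J adj2 ([true] ++ y ++ [true]) < J adj2 y) ∧
      J adj2 x = x.count false + 1 ∧
      J adj2 ([true] ++ x ++ [true]) ≤ x.count false ∧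
      J adj2 ([true] ++ x ++ [true]) < J adj2 x := by
  intro x
  have hcount : x.count false = 6 := by decide
  have hJx : J adj2 x = x.count false + 1 :=
    le_antisymm (J_le_count_false_add_one x) (hcount ▸ seven_le_J)
  have hJ1x1 := J_one_append_append_one_le_count_false x
  exact ⟨⟨x, by omega⟩, hJx, hJ1x1, by omega⟩
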